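/- Suppose NF_f(G₀,G₁,G₂,G₃) holds (stable amalgamation of locally finite groups G₁, G₂ over a finite group G₀ inside G₃), and let a ∈ G₁ \ G₀, b ∈ G₂ \ G₀. Then a and b commute in G₃ if and only if: a commutes with every element of G₀, b commutes with every element of G₀, and G₀ is abelian. -/

import Mathlib

/-!
Everything happens inside the finite subgroups `K₁ = ⟨G₀, a⟩` and `K₂ = ⟨G₀, b⟩`, where
`NF_fin` applies. There `e₁ a` and `e₂ b` commute iff the permutations `j₁ a` and `j₂ b` of the
triples commute for every amalgamation try: compatible homomorphisms carry commutation from `G₃`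
to the tries, and separating witnesses carry it back.

If `a` and `b` centralize `G₀`, then `j₁ a` and `j₂ b` only multiply the `G₀`-coordinate on the
left by fixed elements, and these multiplications commute when `G₀` is abelian. Conversely,
choosing the coset representatives so that `a` and `ι₂ g * b` (resp. `ι₁ g * a` and `b`, resp.
`a * (ι₁ g)⁻¹` and `b * (ι₂ g')⁻¹`) are among them and following one triple through both
orders of `j₁ a`, `j₂ b` forces `a` (resp. `b`) to commute with `ι₁ g` (resp. `ι₂ g`), and then
`g` to commute with `g'`.
-/

universe u

/-- A group is locally finite if every finitely generated subgroup is finite. -/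
def IsLocallyFiniteGroup (G : Type*) [Group G] : Prop :=
  ∀ s : Finset G, (Subgroup.closure (s : Set G) : Set G).Finite

/-- An amalgamation try over `G₀ ⊆ H₁`, `G₀ ⊆ H₂` (given by the embeddings
`κ₁`, `κ₂`): a choice of left coset representative sets `I₁ ⊆ H₁`, `I₂ ⊆ H₂`
of `G₀`, both containing the identity. -/
structure AmalgTry (G₀ H₁ H₂ : Type u) [Group G₀] [Group H₁] [Group H₂]
    (κ₁ : G₀ →* H₁) (κ₂ : G₀ →* H₂) where
  I₁ : Set H₁
  I₂ : Set H₂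
  one₁ : (1 : H₁) ∈ I₁
  one₂ : (1 : H₂) ∈ I₂
  rep₁ : ∀ g : H₁, ∃! r, r ∈ I₁ ∧ ∃ h : G₀, g = r * κ₁ h
  rep₂ : ∀ g : H₂, ∃! r, r ∈ I₂ ∧ ∃ h : G₀, g = r * κ₂ h

namespace AmalgTry

variable {G₀ H₁ H₂ : Type u} [Group G₀] [Group H₁] [Group H₂]
  {κ₁ : G₀ →* H₁} {κ₂ : G₀ →* H₂}

/-- The set of triples `(g₀, g₁, g₂)` with `g₀ ∈ G₀`, `g₁ ∈ I₁`, `g₂ ∈ I₂`. -/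
abbrev U (x : AmalgTry G₀ H₁ H₂ κ₁ κ₂) : Type u :=
  {p : G₀ × H₁ × H₂ // p.2.1 ∈ x.I₁ ∧ p.2.2 ∈ x.I₂}

/-- The canonical action of `g ∈ H₁` on the triples: `(g₀,g₁,g₂) ↦ (g₀',g₁',g₂)`
where `g₁' * g₀' = g₁ * g₀ * g` is the unique coset decomposition. -/
noncomputable def j₁ (x : AmalgTry G₀ H₁ H₂ κ₁ κ₂) (g : H₁) (u : x.U) : x.U :=
  ⟨⟨((x.rep₁ (u.val.2.1 * κ₁ u.val.1 * g)).exists.choose_spec.2).choose,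
    (x.rep₁ (u.val.2.1 * κ₁ u.val.1 * g)).exists.choose,
    u.val.2.2⟩,
   ⟨(x.rep₁ (u.val.2.1 * κ₁ u.val.1 * g)).exists.choose_spec.1, u.prop.2⟩⟩

/-- The canonical action of `g ∈ H₂` on the triples: `(g₀,g₁,g₂) ↦ (g₀'',g₁,g₂'')`
where `g₂'' * g₀'' = g₂ * g₀ * g` is the unique coset decomposition. -/
noncomputable def j₂ (x : AmalgTry G₀ H₁ H₂ κ₁ κ₂) (g : H₂) (u : x.U) : x.U :=
  ⟨⟨((x.rep₂ (u.val.2.2 * κ₂ u.val.1 * g)).exists.choose_spec.2).choose,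
    u.val.2.1,
    (x.rep₂ (u.val.2.2 * κ₂ u.val.1 * g)).exists.choose⟩,
   ⟨u.prop.1, (x.rep₂ (u.val.2.2 * κ₂ u.val.1 * g)).exists.choose_spec.1⟩⟩

end AmalgTry

/-- `F : G₃ → (U → U)` is a compatible homomorphism for the try `x`: it is an
(anti)homomorphism to the permutations of the triples (composition read from
the left as in the paper) restricting to `j₁` on `G₁` and to `j₂` on `G₂`. -/
def CompatAt {G₀ G₁ G₂ G₃ H₁ H₂ : Type u}
    [Group G₀] [Group G₁] [Group G₂] [Group G₃] [Group H₁] [Group H₂]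
    (ι₁ : G₀ →* G₁) (ι₂ : G₀ →* G₂) (e₁ : G₁ →* G₃) (e₂ : G₂ →* G₃)
    (f₁ : G₁ →* H₁) (f₂ : G₂ →* H₂)
    (x : AmalgTry G₀ H₁ H₂ (f₁.comp ι₁) (f₂.comp ι₂))
    (F : G₃ → (x.U → x.U)) : Prop :=
  F 1 = id ∧ (∀ a b : G₃, F (a * b) = F b ∘ F a) ∧
  (∀ g : G₁, F (e₁ g) = x.j₁ (f₁ g)) ∧ (∀ g : G₂, F (e₂ g) = x.j₂ (f₂ g))

/-- A witness that some amalgamation try separates `a ∈ G₃` from the identity. -/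
structure SepWitness {G₀ G₁ G₂ G₃ : Type u}
    [Group G₀] [Group G₁] [Group G₂] [Group G₃]
    (ι₁ : G₀ →* G₁) (ι₂ : G₀ →* G₂) (e₁ : G₁ →* G₃) (e₂ : G₂ →* G₃)
    (a : G₃) : Type (u + 1) where
  H₁ : Type u
  H₂ : Type u
  [grp₁ : Group H₁]
  [grp₂ : Group H₂]
  f₁ : G₁ →* H₁
  f₂ : G₂ →* H₂
  inj₁ : Function.Injective f₁
  inj₂ : Function.Injective f₂
  lf₁ : IsLocallyFiniteGroup H₁
  lf₂ : IsLocallyFiniteGroup H₂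
  x : AmalgTry G₀ H₁ H₂ (f₁.comp ι₁) (f₂.comp ι₂)
  F : G₃ → (x.U → x.U)
  compat : CompatAt ι₁ ι₂ e₁ e₂ f₁ f₂ x F
  sep : F a ≠ id

/-- `NF_fin(G₀,G₁,G₂,G₃)`: the canonical stable amalgam of `G₁`, `G₂` over `G₀`
inside `G₃` (the subgroup inclusions are given by the injective homomorphisms
`ι₁`, `ι₂`, `e₁`, `e₂` with `e₁ ∘ ι₁ = e₂ ∘ ι₂`, and `G₃ = ⟨G₁ ∪ G₂⟩`):
for every amalgamation try (over locally finite extensions of the factors)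
there is a compatible homomorphism from `G₃`, and these jointly separate
the points of `G₃`. -/
def NFfin (G₀ G₁ G₂ G₃ : Type u) [Group G₀] [Group G₁] [Group G₂] [Group G₃]
    (ι₁ : G₀ →* G₁) (ι₂ : G₀ →* G₂) (e₁ : G₁ →* G₃) (e₂ : G₂ →* G₃) : Prop :=
  Function.Injective ι₁ ∧ Function.Injective ι₂ ∧
  Function.Injective e₁ ∧ Function.Injective e₂ ∧
  (∀ g : G₀, e₁ (ι₁ g) = e₂ (ι₂ g)) ∧
  Subgroup.closure (Set.range e₁ ∪ Set.range e₂) = (⊤ : Subgroup G₃) ∧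
  (∀ (H₁ H₂ : Type u) [Group H₁] [Group H₂] (f₁ : G₁ →* H₁) (f₂ : G₂ →* H₂),
    Function.Injective f₁ → Function.Injective f₂ →
    IsLocallyFiniteGroup H₁ → IsLocallyFiniteGroup H₂ →
    ∀ x : AmalgTry G₀ H₁ H₂ (f₁.comp ι₁) (f₂.comp ι₂),
      ∃ F : G₃ → (x.U → x.U), CompatAt ι₁ ι₂ e₁ e₂ f₁ f₂ x F) ∧
  (∀ a : G₃, a ≠ 1 → Nonempty (SepWitness ι₁ ι₂ e₁ e₂ a))

/-- `NF_f(G₀,G₁,G₂,G₃)`: stable amalgamation of the (locally finite) groups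
`G₁`, `G₂` over the finite base `G₀` inside `G₃`: for all finite subgroups
`K₁ ⊆ G₁`, `K₂ ⊆ G₂` containing (the image of) `G₀`, letting
`G₃' = ⟨K₁ ∪ K₂⟩ ⊆ G₃`, the canonical finite stable amalgam
`NF_fin(G₀,K₁,K₂,G₃')` holds. -/
def NFf (G₀ G₁ G₂ G₃ : Type u) [Group G₀] [Group G₁] [Group G₂] [Group G₃]
    (ι₁ : G₀ →* G₁) (ι₂ : G₀ →* G₂) (e₁ : G₁ →* G₃) (e₂ : G₂ →* G₃) : Prop :=
  Function.Injective ι₁ ∧ Function.Injective ι₂ ∧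
  Function.Injective e₁ ∧ Function.Injective e₂ ∧
  (∀ g : G₀, e₁ (ι₁ g) = e₂ (ι₂ g)) ∧
  ∀ (K₁ : Subgroup G₁) (K₂ : Subgroup G₂),
    (K₁ : Set G₁).Finite → (K₂ : Set G₂).Finite →
    ∀ (h₁ : ∀ g : G₀, ι₁ g ∈ K₁) (h₂ : ∀ g : G₀, ι₂ g ∈ K₂),
      NFfin G₀ ↥K₁ ↥K₂
        ↥(Subgroup.closure (e₁ '' (K₁ : Set G₁) ∪ e₂ '' (K₂ : Set G₂)))
        (ι₁.codRestrict K₁ h₁) (ι₂.codRestrict K₂ h₂)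
        (MonoidHom.codRestrict (e₁.comp K₁.subtype) _
          (fun k => Subgroup.subset_closure (Set.mem_union_left _ ⟨k.1, k.2, rfl⟩)))
        (MonoidHom.codRestrict (e₂.comp K₂.subtype) _
          (fun k => Subgroup.subset_closure (Set.mem_union_right _ ⟨k.1, k.2, rfl⟩)))

theorem IsLocallyFiniteGroup.finite_closure {G : Type*} [Group G] (hG : IsLocallyFiniteGroup G)
    {s : Set G} (hs : s.Finite) : (Subgroup.closure s : Set G).Finite := by
  simpa using hG hs.toFinset

theorem IsLocallyFiniteGroup.of_finite (G : Type*) [Group G] [Finite G] :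
    IsLocallyFiniteGroup G :=
  fun _ => Set.toFinite _

section Transversal

variable {G₀ H : Type u} [Group G₀] [Group H]

theorem existsUnique_mul_of_section (κ : G₀ →* H) (s : H ⧸ κ.range → H)
    (hs : ∀ q, (s q : H ⧸ κ.range) = q) (g : H) :
    ∃! r, r ∈ Set.range s ∧ ∃ h : G₀, g = r * κ h := by
  have mk_eq_iff : ∀ r : H, (r : H ⧸ κ.range) = g ↔ ∃ h : G₀, g = r * κ h := by
    intro r
    rw [QuotientGroup.eq]
    constructor
    · rintro ⟨h, hh⟩
      exact ⟨h, by rw [hh, mul_inv_cancel_left]⟩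
    · rintro ⟨h, rfl⟩
      exact ⟨h, by rw [inv_mul_cancel_left]⟩
  refine ⟨s g, ⟨⟨g, rfl⟩, (mk_eq_iff _).1 (hs g)⟩, ?_⟩
  rintro _ ⟨⟨q, rfl⟩, hq⟩
  rw [← (mk_eq_iff _).2 hq, hs]

theorem exists_transversal_one_mem_mem (κ : G₀ →* H) {c : H} (hc : c ∉ κ.range) :
    ∃ I : Set H, 1 ∈ I ∧ c ∈ I ∧ ∀ g : H, ∃! r, r ∈ I ∧ ∃ h : G₀, g = r * κ h := by
  classical
  have hne : ((1 : H) : H ⧸ κ.range) ≠ c := fun h => hc (by simpa using QuotientGroup.eq.1 h)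
  let s := Function.update (Function.update Quotient.out ((1 : H) : H ⧸ κ.range) 1)
    (c : H ⧸ κ.range) c
  refine ⟨Set.range s, ⟨((1 : H) : H ⧸ κ.range), by simp [s, hne]⟩,
    ⟨(c : H ⧸ κ.range), by simp [s]⟩,
    existsUnique_mul_of_section κ s fun q => ?_⟩
  by_cases hqc : q = c
  · simp [s, hqc]
  by_cases hq1 : q = ((1 : H) : H ⧸ κ.range)
  · simp [s, hq1, hne]
  · simp [s, hqc, hq1]

end Transversal

namespace AmalgTry

variable {G₀ H₁ H₂ : Type u} [Group G₀] [Group H₁] [Group H₂] {κ₁ : G₀ →* H₁} {κ₂ : G₀ →* H₂}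

theorem exists_mem_I₁_mem_I₂ {c₁ : H₁} {c₂ : H₂} (hc₁ : c₁ ∉ κ₁.range) (hc₂ : c₂ ∉ κ₂.range) :
    ∃ x : AmalgTry G₀ H₁ H₂ κ₁ κ₂, c₁ ∈ x.I₁ ∧ c₂ ∈ x.I₂ := by
  obtain ⟨I₁, one₁, hc₁, rep₁⟩ := exists_transversal_one_mem_mem κ₁ hc₁
  obtain ⟨I₂, one₂, hc₂, rep₂⟩ := exists_transversal_one_mem_mem κ₂ hc₂
  exact ⟨⟨I₁, I₂, one₁, one₂, rep₁, rep₂⟩, hc₁, hc₂⟩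

variable (x : AmalgTry G₀ H₁ H₂ κ₁ κ₂)

@[simp]
theorem j₁_apply_snd (g : H₁) (u : x.U) : (x.j₁ g u).1.2.2 = u.1.2.2 := rfl

@[simp]
theorem j₂_apply_fst (g : H₂) (u : x.U) : (x.j₂ g u).1.2.1 = u.1.2.1 := rfl

theorem j₁_apply_eq_iff (hκ₁ : Function.Injective κ₁) (g : H₁) (u v : x.U) :
    x.j₁ g u = v ↔ v.1.2.2 = u.1.2.2 ∧ u.1.2.1 * κ₁ u.1.1 * g = v.1.2.1 * κ₁ v.1.1 := by
  have spec : u.1.2.1 * κ₁ u.1.1 * g = (x.j₁ g u).1.2.1 * κ₁ (x.j₁ g u).1.1 :=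
    ((x.rep₁ _).exists.choose_spec.2).choose_spec
  refine ⟨fun h => h ▸ ⟨rfl, spec⟩, fun ⟨h₂, h⟩ => ?_⟩
  have h₁ : (x.j₁ g u).1.2.1 = v.1.2.1 :=
    (x.rep₁ _).unique ⟨(x.j₁ g u).2.1, _, spec⟩ ⟨v.2.1, _, h⟩
  have h₀ : (x.j₁ g u).1.1 = v.1.1 := hκ₁ <| mul_left_cancel <| h₁ ▸ spec.symm.trans h
  exact Subtype.ext (Prod.ext h₀ (Prod.ext h₁ h₂.symm))

theorem j₂_apply_eq_iff (hκ₂ : Function.Injective κ₂) (g : H₂) (u v : x.U) :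
    x.j₂ g u = v ↔ v.1.2.1 = u.1.2.1 ∧ u.1.2.2 * κ₂ u.1.1 * g = v.1.2.2 * κ₂ v.1.1 := by
  have spec : u.1.2.2 * κ₂ u.1.1 * g = (x.j₂ g u).1.2.2 * κ₂ (x.j₂ g u).1.1 :=
    ((x.rep₂ _).exists.choose_spec.2).choose_spec
  refine ⟨fun h => h ▸ ⟨rfl, spec⟩, fun ⟨h₁, h⟩ => ?_⟩
  have h₂ : (x.j₂ g u).1.2.2 = v.1.2.2 :=
    (x.rep₂ _).unique ⟨(x.j₂ g u).2.2, _, spec⟩ ⟨v.2.2, _, h⟩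
  have h₀ : (x.j₂ g u).1.1 = v.1.1 := hκ₂ <| mul_left_cancel <| h₂ ▸ spec.symm.trans h
  exact Subtype.ext (Prod.ext h₀ (Prod.ext h₁.symm h₂))

theorem commute_j₁_j₂ (hκ₁ : Function.Injective κ₁) (hκ₂ : Function.Injective κ₂)
    {a : H₁} {b : H₂}
    (ha : ∀ g, Commute a (κ₁ g)) (hb : ∀ g, Commute b (κ₂ g))
    (hG₀ : ∀ g g' : G₀, Commute g g') :
    Function.Commute (x.j₁ a) (x.j₂ b) := by
  intro u
  obtain ⟨r, ⟨hr, ga, hra⟩, -⟩ := x.rep₁ (u.1.2.1 * a)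
  obtain ⟨s, ⟨hs, gb, hsb⟩, -⟩ := x.rep₂ (u.1.2.2 * b)
  -- since `a` centralizes `κ₁ G₀`, `g₁ * κ₁ g₀ * a = (g₁ * a) * κ₁ g₀` decomposes along `g₁ * a`
  have hj₁ : ∀ v : x.U, v.1.2.1 = u.1.2.1 →
      x.j₁ a v = ⟨(ga * v.1.1, r, v.1.2.2), hr, v.2.2⟩ := by
    intro v hv
    refine (x.j₁_apply_eq_iff hκ₁ _ _ _).2 ⟨rfl, ?_⟩
    dsimp only
    rw [hv, mul_assoc, ← (ha _).eq, ← mul_assoc, hra, map_mul, mul_assoc]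
  have hj₂ : ∀ v : x.U, v.1.2.2 = u.1.2.2 →
      x.j₂ b v = ⟨(gb * v.1.1, v.1.2.1, s), v.2.1, hs⟩ := by
    intro v hv
    refine (x.j₂_apply_eq_iff hκ₂ _ _ _).2 ⟨rfl, ?_⟩
    dsimp only
    rw [hv, mul_assoc, ← (hb _).eq, ← mul_assoc, hsb, map_mul, mul_assoc]
  rw [hj₁ (x.j₂ b u) rfl, hj₂ (x.j₁ a u) rfl, hj₁ u rfl, hj₂ u rfl]
  simp only [← mul_assoc, (hG₀ ga gb).eq]

theorem commute_left_of_forall_commute_j₁_j₂ (hκ₁ : Function.Injective κ₁)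
    (hκ₂ : Function.Injective κ₂) {a : H₁} {b : H₂} (ha : a ∉ κ₁.range) (hb : b ∉ κ₂.range)
    (h : ∀ x : AmalgTry G₀ H₁ H₂ κ₁ κ₂, Function.Commute (x.j₁ a) (x.j₂ b)) (g : G₀) :
    Commute a (κ₁ g) := by
  have hc : κ₂ g * b ∉ κ₂.range :=
    (κ₂.range.mul_mem_cancel_left ⟨g, rfl⟩).not.2 hb
  obtain ⟨x, haI, hcI⟩ := exists_mem_I₁_mem_I₂ ha hc
  let u : x.U := ⟨(g, 1, 1), x.one₁, x.one₂⟩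
  have hu₂ : x.j₂ b u = ⟨(1, 1, κ₂ g * b), x.one₁, hcI⟩ :=
    (x.j₂_apply_eq_iff hκ₂ _ _ _).2 ⟨rfl, by simp [u]⟩
  have hu₂₁ : x.j₁ a (x.j₂ b u) = ⟨(1, a, κ₂ g * b), haI, hcI⟩ := by
    rw [hu₂, x.j₁_apply_eq_iff hκ₁]
    exact ⟨rfl, by simp⟩
  obtain ⟨hw₁, hw⟩ := (x.j₂_apply_eq_iff hκ₂ b (x.j₁ a u) _).1 ((h x u).symm.trans hu₂₁)
  have hw₀ : (x.j₁ a u).1.1 = g := hκ₂ (by simpa [u] using hw)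
  have := ((x.j₁_apply_eq_iff hκ₁ a u _).1 rfl).2
  rw [← hw₁, hw₀] at this
  simpa [u, commute_iff_eq] using this.symm

theorem commute_right_of_forall_commute_j₁_j₂ (hκ₁ : Function.Injective κ₁)
    (hκ₂ : Function.Injective κ₂) {a : H₁} {b : H₂} (ha : a ∉ κ₁.range) (hb : b ∉ κ₂.range)
    (h : ∀ x : AmalgTry G₀ H₁ H₂ κ₁ κ₂, Function.Commute (x.j₁ a) (x.j₂ b)) (g : G₀) :
    Commute b (κ₂ g) := by
  have hc : κ₁ g * a ∉ κ₁.range := (κ₁.range.mul_mem_cancel_left ⟨g, rfl⟩).not.2 ha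
  obtain ⟨x, hcI, hbI⟩ := exists_mem_I₁_mem_I₂ hc hb
  let u : x.U := ⟨(g, 1, 1), x.one₁, x.one₂⟩
  have hu₁ : x.j₁ a u = ⟨(1, κ₁ g * a, 1), hcI, x.one₂⟩ :=
    (x.j₁_apply_eq_iff hκ₁ _ _ _).2 ⟨rfl, by simp [u]⟩
  have hu₁₂ : x.j₂ b (x.j₁ a u) = ⟨(1, κ₁ g * a, b), hcI, hbI⟩ := by
    rw [hu₁, x.j₂_apply_eq_iff hκ₂]
    exact ⟨rfl, by simp⟩
  obtain ⟨hw₂, hw⟩ := (x.j₁_apply_eq_iff hκ₁ a (x.j₂ b u) _).1 ((h x u).trans hu₁₂)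
  have hw₀ : (x.j₂ b u).1.1 = g := hκ₁ (by simpa [u] using hw)
  have := ((x.j₂_apply_eq_iff hκ₂ b u _).1 rfl).2
  rw [← hw₂, hw₀] at this
  simpa [u, commute_iff_eq] using this.symm

theorem commute_of_forall_commute_j₁_j₂ (hκ₁ : Function.Injective κ₁)
    (hκ₂ : Function.Injective κ₂) {a : H₁} {b : H₂} (ha : a ∉ κ₁.range) (hb : b ∉ κ₂.range)
    (hcomm₁ : ∀ g, Commute a (κ₁ g)) (hcomm₂ : ∀ g, Commute b (κ₂ g))
    (h : ∀ x : AmalgTry G₀ H₁ H₂ κ₁ κ₂, Function.Commute (x.j₁ a) (x.j₂ b)) (g g' : G₀) :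
    Commute g g' := by
  have hc₁ : a * (κ₁ g)⁻¹ ∉ κ₁.range :=
    (κ₁.range.mul_mem_cancel_right (inv_mem ⟨g, rfl⟩)).not.2 ha
  have hc₂ : b * (κ₂ g')⁻¹ ∉ κ₂.range :=
    (κ₂.range.mul_mem_cancel_right (inv_mem ⟨g', rfl⟩)).not.2 hb
  obtain ⟨x, hc₁I, hc₂I⟩ := exists_mem_I₁_mem_I₂ hc₁ hc₂
  let u : x.U := ⟨(1, 1, 1), x.one₁, x.one₂⟩
  have hu₁ : x.j₁ a u = ⟨(g, a * (κ₁ g)⁻¹, 1), hc₁I, x.one₂⟩ :=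
    (x.j₁_apply_eq_iff hκ₁ _ _ _).2 ⟨rfl, by simp [u]⟩
  have hu₁₂ : x.j₂ b (x.j₁ a u) = ⟨(g' * g, a * (κ₁ g)⁻¹, b * (κ₂ g')⁻¹), hc₁I, hc₂I⟩ := by
    rw [hu₁, x.j₂_apply_eq_iff hκ₂]
    exact ⟨rfl, by simp [← (hcomm₂ g).eq, mul_assoc]⟩
  have hu₂ : x.j₂ b u = ⟨(g', 1, b * (κ₂ g')⁻¹), x.one₁, hc₂I⟩ :=
    (x.j₂_apply_eq_iff hκ₂ _ _ _).2 ⟨rfl, by simp [u]⟩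
  have hu₂₁ : x.j₁ a (x.j₂ b u) = ⟨(g * g', a * (κ₁ g)⁻¹, b * (κ₂ g')⁻¹), hc₁I, hc₂I⟩ := by
    rw [hu₂, x.j₁_apply_eq_iff hκ₁]
    exact ⟨rfl, by simp [← (hcomm₁ g').eq, mul_assoc]⟩
  have := h x u
  rw [hu₁₂, hu₂₁] at this
  exact congrArg (·.1.1) this

end AmalgTry

section Amalgam

variable {G₀ G₁ G₂ G₃ : Type u} [Group G₀] [Group G₁] [Group G₂] [Group G₃]
  {ι₁ : G₀ →* G₁} {ι₂ : G₀ →* G₂} {e₁ : G₁ →* G₃} {e₂ : G₂ →* G₃}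

theorem CompatAt.commute_j₁_j₂ {H₁ H₂ : Type u} [Group H₁] [Group H₂]
    {f₁ : G₁ →* H₁} {f₂ : G₂ →* H₂} {x : AmalgTry G₀ H₁ H₂ (f₁.comp ι₁) (f₂.comp ι₂)}
    {F : G₃ → x.U → x.U} (hF : CompatAt ι₁ ι₂ e₁ e₂ f₁ f₂ x F) {g : G₁} {h : G₂}
    (hc : Commute (e₁ g) (e₂ h)) : Function.Commute (x.j₁ (f₁ g)) (x.j₂ (f₂ h)) := by
  obtain ⟨-, hmul, hF₁, hF₂⟩ := hF
  have := congrArg F hc.eq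
  rw [hmul, hmul, hF₁, hF₂] at this
  exact fun u => (congrFun this u).symm

theorem NFfin.commute_of_forall_commute_j₁_j₂ (hNF : NFfin G₀ G₁ G₂ G₃ ι₁ ι₂ e₁ e₂)
    {g : G₁} {h : G₂}
    (hj : ∀ (H₁ H₂ : Type u) [Group H₁] [Group H₂] (f₁ : G₁ →* H₁) (f₂ : G₂ →* H₂),
      Function.Injective f₁ → Function.Injective f₂ →
      ∀ x : AmalgTry G₀ H₁ H₂ (f₁.comp ι₁) (f₂.comp ι₂),
        Function.Commute (x.j₁ (f₁ g)) (x.j₂ (f₂ h))) :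
    Commute (e₁ g) (e₂ h) := by
  obtain ⟨-, -, -, -, -, -, -, hsep⟩ := hNF
  by_contra hne
  obtain ⟨W⟩ := hsep (e₁ g * e₂ h * (e₂ h * e₁ g)⁻¹) (mul_inv_eq_one.not.2 hne)
  let := W.grp₁
  let := W.grp₂
  obtain ⟨hF1, hmul, hF₁, hF₂⟩ := W.compat
  have hswap : W.F (e₁ g * e₂ h) = W.F (e₂ h * e₁ g) := by
    rw [hmul, hmul, hF₁, hF₂]
    funext u
    exact (hj _ _ _ _ W.inj₁ W.inj₂ W.x u).symm
  exact W.sep (by rw [hmul, hswap, ← hmul, mul_inv_cancel, hF1])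

theorem NFfin.commute_iff (hNF : NFfin G₀ G₁ G₂ G₃ ι₁ ι₂ e₁ e₂)
    (hlf₁ : IsLocallyFiniteGroup G₁) (hlf₂ : IsLocallyFiniteGroup G₂)
    {a : G₁} {b : G₂} (ha : a ∉ ι₁.range) (hb : b ∉ ι₂.range) :
    Commute (e₁ a) (e₂ b) ↔
      (∀ g, Commute a (ι₁ g)) ∧ (∀ g, Commute b (ι₂ g)) ∧ ∀ g g' : G₀, Commute g g' := by
  have ⟨hι₁, hι₂, _, _, _, _, hex, _⟩ := hNF
  constructor
  · intro hc
    have hj : ∀ x : AmalgTry G₀ G₁ G₂ ((MonoidHom.id G₁).comp ι₁) ((MonoidHom.id G₂).comp ι₂),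
        Function.Commute (x.j₁ a) (x.j₂ b) := fun x =>
      (hex _ _ _ _ Function.injective_id Function.injective_id hlf₁ hlf₂ x).choose_spec
        |>.commute_j₁_j₂ hc
    have hA := AmalgTry.commute_left_of_forall_commute_j₁_j₂ hι₁ hι₂ ha hb hj
    have hB := AmalgTry.commute_right_of_forall_commute_j₁_j₂ hι₁ hι₂ ha hb hj
    exact ⟨hA, hB, AmalgTry.commute_of_forall_commute_j₁_j₂ hι₁ hι₂ ha hb hA hB hj⟩
  · rintro ⟨hA, hB, hG₀⟩
    exact hNF.commute_of_forall_commute_j₁_j₂ fun H₁ H₂ _ _ f₁ f₂ hf₁ hf₂ x =>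
      x.commute_j₁_j₂ (hf₁.comp hι₁) (hf₂.comp hι₂) (fun g => (hA g).map f₁)
        (fun g => (hB g).map f₂) hG₀

end Amalgam

theorem stmt17_general {G₀ G₁ G₂ G₃ : Type u}
    [Group G₀] [Group G₁] [Group G₂] [Group G₃] [Finite G₀]
    (hlf₁ : IsLocallyFiniteGroup G₁) (hlf₂ : IsLocallyFiniteGroup G₂)
    (ι₁ : G₀ →* G₁) (ι₂ : G₀ →* G₂) (e₁ : G₁ →* G₃) (e₂ : G₂ →* G₃)
    (h : NFf G₀ G₁ G₂ G₃ ι₁ ι₂ e₁ e₂)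
    (a : G₁) (b : G₂)
    (ha : a ∉ Set.range ι₁) (hb : b ∉ Set.range ι₂) :
    Commute (e₁ a) (e₂ b) ↔
      ((∀ g : G₀, Commute a (ι₁ g)) ∧ (∀ g : G₀, Commute b (ι₂ g)) ∧
        (∀ g g' : G₀, Commute g g')) := by
  obtain ⟨-, -, -, -, -, hNF⟩ := h
  set K₁ := Subgroup.closure (Set.range ι₁ ∪ {a})
  set K₂ := Subgroup.closure (Set.range ι₂ ∪ {b})
  have hK₁ : (K₁ : Set G₁).Finite :=
    hlf₁.finite_closure ((Set.finite_range ι₁).union (Set.finite_singleton a))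
  have hK₂ : (K₂ : Set G₂).Finite :=
    hlf₂.finite_closure ((Set.finite_range ι₂).union (Set.finite_singleton b))
  have : Finite K₁ := hK₁.to_subtype
  have : Finite K₂ := hK₂.to_subtype
  have hι₁K : ∀ g, ι₁ g ∈ K₁ := fun g => Subgroup.subset_closure (Or.inl ⟨g, rfl⟩)
  have hι₂K : ∀ g, ι₂ g ∈ K₂ := fun g => Subgroup.subset_closure (Or.inl ⟨g, rfl⟩)
  have key := (hNF K₁ K₂ hK₁ hK₂ hι₁K hι₂K).commute_iff (IsLocallyFiniteGroup.of_finite K₁)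
    (IsLocallyFiniteGroup.of_finite K₂) (a := ⟨a, Subgroup.subset_closure (Or.inr rfl)⟩)
    (b := ⟨b, Subgroup.subset_closure (Or.inr rfl)⟩)
    (fun ⟨g, hg⟩ => ha ⟨g, congrArg Subtype.val hg⟩)
    (fun ⟨g, hg⟩ => hb ⟨g, congrArg Subtype.val hg⟩)
  simp only [← Submonoid.commute_coe_coe] at key
  exact key

/-- Suppose `NF_f(G₀,G₁,G₂,G₃)` holds for locally finite groups `G₁`, `G₂`
over the finite base `G₀`, and `a ∈ G₁ \ G₀`, `b ∈ G₂ \ G₀`.  Then `a` and `b`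
commute in `G₃` iff `a` commutes with every element of `G₀`, `b` commutes with
every element of `G₀`, and `G₀` is abelian. -/
theorem stmt17 {G₀ G₁ G₂ G₃ : Type u}
    [Group G₀] [Group G₁] [Group G₂] [Group G₃] [Finite G₀]
    (hlf₁ : IsLocallyFiniteGroup G₁) (hlf₂ : IsLocallyFiniteGroup G₂)
    (hlf₃ : IsLocallyFiniteGroup G₃)
    (ι₁ : G₀ →* G₁) (ι₂ : G₀ →* G₂) (e₁ : G₁ →* G₃) (e₂ : G₂ →* G₃)
    (h : NFf G₀ G₁ G₂ G₃ ι₁ ι₂ e₁ e₂)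
    (a : G₁) (b : G₂)
    (ha : a ∉ Set.range ι₁) (hb : b ∉ Set.range ι₂) :
    Commute (e₁ a) (e₂ b) ↔
      ((∀ g : G₀, Commute a (ι₁ g)) ∧ (∀ g : G₀, Commute b (ι₂ g)) ∧
        (∀ g g' : G₀, Commute g g')) :=
  stmt17_general hlf₁ hlf₂ ι₁ ι₂ e₁ e₂ h a b ha hb
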